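/- arXiv:1311.5769 — 8 statements merged into one kernel-verified Lean document; each statement's English description precedes it below -/
import Mathlib

section
/- For natural numbers n and k with k ≤ n and n ≡ k (mod 2), the number of sequences s : Fin n → ℤ with every value s i ∈ {1, −1}, with every partial sum ∑_{j<i} s j ≥ 0 (for all i ≤ n), and with total sum ∑_{j<n} s j = k, equals ((k+1)/(n+1))·C(n+1, (n−k)/2), where C denotes the binomial coefficient. -/
/-!
Let `D(n, c)` be the number of paths of length `n` ending at height `c`. Removing the last step
gives `D(n + 1, c) = D(n, c - 1) + D(n, c + 1)` for `c ≥ 0`, with `D(n, -1) = 0`, `D(n, n + 2) = 0`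
and `D(n, n) = 1`. Indexing by the number `j` of down steps, `n = 2j + k`, the ballot numbers
`(k + 1) / (2j + k + 1) * C(2j + k + 1, j)` satisfy the same recurrence by Pascal's rule and
`(m + 1) C(n, m) = (n - m) C(n, m + 1)`, so the two agree.
-/

open Finset

namespace DyckTriangle

def height {n : ℕ} (s : Fin n → ℤ) (i : ℕ) : ℤ :=
  ∑ j ∈ univ.filter (fun j : Fin n => (j : ℕ) < i), s j

def paths (n : ℕ) (c : ℤ) : Finset (Fin n → ℤ) :=
  (Fintype.piFinset fun _ : Fin n => ({1, -1} : Finset ℤ)).filter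
    fun s => (∀ i ≤ n, 0 ≤ height s i) ∧ ∑ j, s j = c

variable {n : ℕ} {c : ℤ}

theorem height_length (s : Fin n → ℤ) : height s n = ∑ j, s j := by
  simp [height]

theorem height_init (s : Fin (n + 1) → ℤ) {i : ℕ} (hi : i ≤ n) :
    height (Fin.init s) i = height s i := by
  simp only [height, sum_filter, Fin.sum_univ_castSucc, Fin.val_castSucc, Fin.val_last,
    Nat.not_lt.mpr hi, if_false, add_zero, Fin.init]

theorem mem_paths {s : Fin n → ℤ} :
    s ∈ paths n c ↔ (∀ i, s i = 1 ∨ s i = -1) ∧ (∀ i ≤ n, 0 ≤ height s i) ∧ ∑ j, s j = c := by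
  simp [paths, Fintype.mem_piFinset]

theorem mem_paths_succ {s : Fin (n + 1) → ℤ} :
    s ∈ paths (n + 1) c ↔ 0 ≤ c ∧ (s (Fin.last n) = 1 ∨ s (Fin.last n) = -1) ∧
      Fin.init s ∈ paths n (c - s (Fin.last n)) := by
  have hsum : ∑ j, s j = ∑ j, Fin.init s j + s (Fin.last n) := Fin.sum_univ_castSucc s
  have hheight : (∀ i ≤ n + 1, 0 ≤ height s i) ↔
      (∀ i ≤ n, 0 ≤ height (Fin.init s) i) ∧ 0 ≤ ∑ j, s j := by
    simp +contextual only [Nat.le_succ_iff, or_imp, forall_and, forall_eq, ← height_length,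
      height_init]
  simp only [mem_paths, Fin.forall_fin_succ', hheight]
  rw [hsum]
  constructor
  · rintro ⟨⟨hsteps, hlast⟩, ⟨hinit, hc⟩, rfl⟩
    exact ⟨hc, hlast, hsteps, hinit, by omega⟩
  · rintro ⟨hc, hlast, hsteps, hinit, hinit_sum⟩
    exact ⟨⟨hsteps, hlast⟩, ⟨hinit, by omega⟩, by omega⟩

theorem paths_eq_empty_of_neg (hc : c < 0) : paths n c = ∅ := by
  refine eq_empty_of_forall_notMem fun s hs => ?_
  obtain ⟨-, hheight, rfl⟩ := mem_paths.mp hs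
  have := hheight n le_rfl
  rw [height_length] at this
  omega

theorem paths_eq_empty_of_lt (hc : (n : ℤ) < c) : paths n c = ∅ := by
  refine eq_empty_of_forall_notMem fun s hs => ?_
  obtain ⟨hsteps, -, rfl⟩ := mem_paths.mp hs
  have : ∑ j, s j ≤ ∑ _j : Fin n, (1 : ℤ) :=
    sum_le_sum fun j _ => by rcases hsteps j with h | h <;> omega
  rw [sum_const, card_univ, Fintype.card_fin, nsmul_one] at this
  omega

theorem card_paths_succ (hc : 0 ≤ c) :
    #(paths (n + 1) c) = #(paths n (c - 1)) + #(paths n (c + 1)) := by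
  have hdisj : Disjoint (paths n (c - 1)) (paths n (c + 1)) :=
    disjoint_left.mpr fun s h h' => by
      have := (mem_paths.mp h).2.2.symm.trans (mem_paths.mp h').2.2
      omega
  have hend : ∀ t ∈ paths n (c - 1) ∪ paths n (c + 1), t ∈ paths n (∑ j, t j) ∧
      (c - ∑ j, t j = 1 ∨ c - ∑ j, t j = -1) := by
    intro t ht
    rcases mem_union.mp ht with h | h <;>
    · obtain ⟨-, -, hsum⟩ := mem_paths.mp h
      exact ⟨hsum ▸ h, by omega⟩
  rw [← card_union_of_disjoint hdisj]
  refine card_nbij' Fin.init (fun t => Fin.snoc t (c - ∑ j, t j)) ?_ ?_ ?_ ?_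
  · intro s hs
    obtain ⟨-, hlast, hinit⟩ := mem_paths_succ.mp hs
    rcases hlast with h | h
    · exact mem_union_left _ (h ▸ hinit)
    · exact mem_union_right _ (by rwa [h, sub_neg_eq_add] at hinit)
  · intro t ht
    obtain ⟨ht, hlast⟩ := hend t ht
    simpa [mem_paths_succ, hc, hlast] using ht
  · intro s hs
    have hlast : c - ∑ j, Fin.init s j = s (Fin.last n) := by
      rw [← (mem_paths.mp hs).2.2, Fin.sum_univ_castSucc]
      exact add_sub_cancel_left _ _
    beta_reduce
    rw [hlast, Fin.snoc_init_self]
  · intro t _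
    exact Fin.init_snoc _ _

theorem card_paths_self : ∀ n : ℕ, #(paths n n) = 1
  | 0 => by
    rw [card_eq_one]
    exact ⟨Fin.elim0, by ext s; simp [mem_paths, height, Subsingleton.elim s Fin.elim0]⟩
  | n + 1 => by
    rw [Nat.cast_succ, card_paths_succ (by positivity), add_sub_cancel_right,
      paths_eq_empty_of_lt (c := n + 1 + 1) (by omega), card_paths_self n, card_empty]

def ballotNumber (j k : ℕ) : ℚ := (k + 1) / (2 * j + k + 1) * (2 * j + k + 1).choose j

theorem ballotNumber_zero_left (k : ℕ) : ballotNumber 0 k = 1 := by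
  simp only [ballotNumber, Nat.choose_zero_right]
  push_cast
  rw [mul_zero, zero_add, mul_one, div_self (by positivity)]

theorem ballotNumber_succ_zero (j : ℕ) : ballotNumber (j + 1) 0 = ballotNumber j 1 := by
  have h := Nat.add_one_mul_choose_eq (2 * j + 2) j
  rw [← @Nat.cast_inj ℚ] at h
  simp only [ballotNumber, show 2 * (j + 1) + 0 + 1 = 2 * j + 2 + 1 by ring,
    show 2 * j + 1 + 1 = 2 * j + 2 by ring]
  push_cast at h ⊢
  field_simp
  linear_combination (-2 : ℚ) * h

theorem ballotNumber_succ_succ (j k : ℕ) :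
    ballotNumber (j + 1) (k + 1) = ballotNumber (j + 1) k + ballotNumber j (k + 2) := by
  have hpascal := Nat.choose_succ_succ' (2 * j + k + 3) j
  have hratio := Nat.choose_succ_right_eq (2 * j + k + 3) j
  rw [show 2 * j + k + 3 - j = j + k + 3 by omega] at hratio
  rw [← @Nat.cast_inj ℚ] at hpascal hratio
  simp only [ballotNumber, show 2 * (j + 1) + (k + 1) + 1 = 2 * j + k + 3 + 1 by ring,
    show 2 * (j + 1) + k + 1 = 2 * j + k + 3 by ring,
    show 2 * j + (k + 2) + 1 = 2 * j + k + 3 by ring,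
    hpascal]
  push_cast at hratio ⊢
  field_simp
  linear_combination (2 * (k : ℚ) + 4 * j + 6) * hratio

theorem card_paths_eq_ballotNumber (j k : ℕ) :
    (#(paths (2 * j + k) k) : ℚ) = ballotNumber j k := by
  induction j generalizing k with
  | zero => rw [mul_zero, zero_add, card_paths_self, Nat.cast_one, ballotNumber_zero_left]
  | succ j ihj =>
    induction k with
    | zero =>
      rw [show 2 * (j + 1) + 0 = 2 * j + 1 + 1 by ring, Nat.cast_zero, card_paths_succ le_rfl,
        paths_eq_empty_of_neg (by norm_num), card_empty, zero_add, zero_add,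
        ballotNumber_succ_zero, ← ihj 1, Nat.cast_one]
    | succ k ihk =>
      have hdown : ((k + 1 : ℕ) : ℤ) - 1 = k := by push_cast; ring
      have hup : ((k + 1 : ℕ) : ℤ) + 1 = (k + 2 : ℕ) := by push_cast; ring
      rw [show 2 * (j + 1) + (k + 1) = 2 * (j + 1) + k + 1 by ring, card_paths_succ (by positivity),
        hdown, hup, Nat.cast_add, ihk, show 2 * (j + 1) + k = 2 * j + (k + 2) by ring, ihj,
        ballotNumber_succ_succ]

end DyckTriangle

/-- Dyck-triangle paths from `(0,0)` to `(n,k)` are counted by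
`((k+1)/(n+1)) * C(n+1, (n-k)/2)`. -/
theorem dyck_triangle_count (n k : ℕ) (hkn : k ≤ n) (hpar : n % 2 = k % 2) :
    (((Fintype.piFinset (fun _ : Fin n => ({1, -1} : Finset ℤ))).filter
        (fun s : Fin n → ℤ =>
          (∀ i ≤ n, 0 ≤ ∑ j ∈ Finset.univ.filter (fun j : Fin n => (j : ℕ) < i), s j) ∧
          (∑ j, s j) = (k : ℤ))).card : ℚ)
      = ((k : ℚ) + 1) / ((n : ℚ) + 1) * (Nat.choose (n + 1) ((n - k) / 2) : ℚ) := by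
  obtain ⟨j, rfl⟩ : ∃ j, n = 2 * j + k := ⟨(n - k) / 2, by omega⟩
  change (#(DyckTriangle.paths (2 * j + k) k) : ℚ) = _
  rw [DyckTriangle.card_paths_eq_ballotNumber, show (2 * j + k - k) / 2 = j by omega,
    DyckTriangle.ballotNumber]
  push_cast
  ring
end

section
/- Let a, b, c be elements of a commutative ring and let k ≤ n be natural numbers. The total weight of all step sequences s of length n whose partial sums (started at height 0) are ≥ 0 after every step and whose final height is k equals ∑_{i=0}^{⌊(n−k)/2⌋} C(n, k+2i)·(C(k+2i, i) − C(k+2i, i−1))·a^{k+i}·b^{n−k−2i}·c^{i}. -/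
/-!
Both sides satisfy the last-step recurrence `F (n+1) k = a F n (k-1) + b F n k + c F n (k+1)`,
with `F n (-1) = 0`, and agree for `n = 0`. For the closed form this is Pascal's rule for
`C(n, k+2i)` combined with the ballot recurrence `β(k, i) = β(k-1, i) + β(k+1, i-1)` for
`β(k, i) = C(k+2i, i) - C(k+2i, i-1)`; at `k = 0` the missing term `β(-1, i)` vanishes by the
symmetry `C(2i-1, i) = C(2i-1, i-1)`.
-/

open Finset

/-- The step sequences of length `L`: functions `Fin L → ℤ` with every value in `{1, 0, -1}`. -/
def stepSeqs (L : ℕ) : Finset (Fin L → ℤ) :=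
  Fintype.piFinset fun _ => ({1, 0, -1} : Finset ℤ)

/-- The weight of a step sequence: `a ^ (#up steps) * b ^ (#flat steps) * c ^ (#down steps)`. -/
def seqWeight {R : Type*} [CommRing R] (a b c : R) {L : ℕ} (s : Fin L → ℤ) : R :=
  a ^ (Finset.univ.filter (fun i => s i = 1)).card *
    b ^ (Finset.univ.filter (fun i => s i = 0)).card *
      c ^ (Finset.univ.filter (fun i => s i = -1)).card

/-- The height of a step sequence after `i` steps, started at height `h`. -/
def seqHeight {L : ℕ} (h : ℤ) (s : Fin L → ℤ) (i : ℕ) : ℤ :=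
  h + ∑ j ∈ Finset.univ.filter (fun j : Fin L => (j : ℕ) < i), s j

section Paths

variable {R : Type*} [CommRing R] (a b c : R)

def stepWeight (x : ℤ) : R :=
  (if x = 1 then a else 1) * (if x = 0 then b else 1) * (if x = -1 then c else 1)

lemma seqWeight_eq_prod {L : ℕ} (s : Fin L → ℤ) :
    seqWeight a b c s = ∏ i, stepWeight a b c (s i) := by
  simp only [seqWeight, stepWeight, prod_mul_distrib, prod_ite, prod_const, one_pow, mul_one]

lemma seqWeight_snoc {n : ℕ} (t : Fin n → ℤ) (x : ℤ) :
    seqWeight a b c (Fin.snoc t x : Fin (n + 1) → ℤ) =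
      stepWeight a b c x * seqWeight a b c t := by
  simp only [seqWeight_eq_prod, Fin.prod_univ_castSucc, Fin.snoc_castSucc, Fin.snoc_last,
    mul_comm]

lemma seqHeight_snoc_of_le {n i : ℕ} (h : ℤ) (t : Fin n → ℤ) (x : ℤ) (hi : i ≤ n) :
    seqHeight h (Fin.snoc t x : Fin (n + 1) → ℤ) i = seqHeight h t i := by
  simp only [seqHeight, sum_filter, Fin.sum_univ_castSucc, Fin.snoc_castSucc, Fin.val_castSucc,
    Fin.val_last]
  rw [if_neg (by omega), add_zero]

lemma seqHeight_snoc_succ {n : ℕ} (h : ℤ) (t : Fin n → ℤ) (x : ℤ) :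
    seqHeight h (Fin.snoc t x : Fin (n + 1) → ℤ) (n + 1) = seqHeight h t n + x := by
  simp only [seqHeight, sum_filter, Fin.sum_univ_castSucc, Fin.snoc_castSucc,
    Fin.snoc_last, Fin.is_lt, if_true]
  ring

lemma stepSeqs_succ (n : ℕ) :
    stepSeqs (n + 1) =
      (({1, 0, -1} : Finset ℤ) ×ˢ stepSeqs n).map (Fin.snocEquiv fun _ => ℤ).toEmbedding := by
  have h := filter_piFinset_eq_map_snocEquiv
    (fun _ : Fin (n + 1) => ({1, 0, -1} : Finset ℤ)) fun _ => True
  rw [filter_true, filter_true] at h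
  exact h

/-- The final height is an integer so that `motzkinWeight a b c n (-1) = 0` needs no special case
in the recurrence `motzkinWeight_succ`. -/
def motzkinWeight (n : ℕ) (k : ℤ) : R :=
  ∑ s ∈ (stepSeqs n).filter
      (fun s => (∀ i ≤ n, 0 ≤ seqHeight 0 s i) ∧ seqHeight 0 s n = k),
    seqWeight a b c s

lemma motzkinWeight_zero (k : ℤ) : motzkinWeight a b c 0 k = if k = 0 then 1 else 0 := by
  split_ifs with hk <;> simp [motzkinWeight, stepSeqs, seqHeight, seqWeight, eq_comm, hk]

lemma motzkinWeight_of_neg (n : ℕ) {k : ℤ} (hk : k < 0) : motzkinWeight a b c n k = 0 := by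
  refine sum_eq_zero fun s hs => absurd (mem_filter.1 hs).2 ?_
  rintro ⟨hnonneg, rfl⟩
  exact (hnonneg n le_rfl).not_gt hk

lemma seqHeight_snoc_nonneg_and_eq_iff {n : ℕ} (t : Fin n → ℤ) (x : ℤ) {k : ℤ}
    (hk : 0 ≤ k) :
    ((∀ i ≤ n + 1, 0 ≤ seqHeight 0 (Fin.snoc t x : Fin (n + 1) → ℤ) i) ∧
        seqHeight 0 (Fin.snoc t x : Fin (n + 1) → ℤ) (n + 1) = k) ↔
      (∀ i ≤ n, 0 ≤ seqHeight 0 t i) ∧ seqHeight 0 t n = k - x := by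
  rw [seqHeight_snoc_succ, ← eq_sub_iff_add_eq]
  constructor
  · rintro ⟨hnonneg, hend⟩
    refine ⟨fun i hi => ?_, hend⟩
    rw [← seqHeight_snoc_of_le 0 t x hi]
    exact hnonneg i (by omega)
  · rintro ⟨hnonneg, hend⟩
    refine ⟨fun i hi => ?_, hend⟩
    rcases hi.lt_or_eq with hi | rfl
    · rw [seqHeight_snoc_of_le 0 t x (by omega)]
      exact hnonneg i (by omega)
    · rw [seqHeight_snoc_succ, hend]
      omega

lemma motzkinWeight_succ (n : ℕ) {k : ℤ} (hk : 0 ≤ k) :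
    motzkinWeight a b c (n + 1) k =
      a * motzkinWeight a b c n (k - 1) + b * motzkinWeight a b c n k +
        c * motzkinWeight a b c n (k + 1) := by
  have last_step : ∀ x : ℤ,
      ∑ t ∈ stepSeqs n,
        (if (∀ i ≤ n + 1, 0 ≤ seqHeight 0 (Fin.snoc t x : Fin (n + 1) → ℤ) i) ∧
            seqHeight 0 (Fin.snoc t x : Fin (n + 1) → ℤ) (n + 1) = k
          then seqWeight a b c (Fin.snoc t x : Fin (n + 1) → ℤ) else 0) =
        stepWeight a b c x * motzkinWeight a b c n (k - x) := by
    intro x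
    rw [motzkinWeight, sum_filter, mul_sum]
    refine sum_congr rfl fun t _ => ?_
    simp only [seqHeight_snoc_nonneg_and_eq_iff t x hk, seqWeight_snoc, mul_ite, mul_zero]
  have snocEquiv_apply : ∀ (x : ℤ) (t : Fin n → ℤ),
      (Fin.snocEquiv fun _ => ℤ) (x, t) = Fin.snoc t x := fun _ _ => rfl
  rw [motzkinWeight, sum_filter, stepSeqs_succ, sum_map, sum_product]
  simp only [Equiv.coe_toEmbedding, snocEquiv_apply, last_step]
  simp [stepWeight, add_assoc]

end Paths

def ballotNum (k i : ℕ) : ℤ :=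
  ((k + 2 * i).choose i : ℤ) - if i = 0 then 0 else ((k + 2 * i).choose (i - 1) : ℤ)

lemma ballotNum_zero_right (k : ℕ) : ballotNum k 0 = 1 := by
  simp [ballotNum]

lemma ballotNum_succ_succ (k i : ℕ) :
    ballotNum (k + 1) (i + 1) = ballotNum k (i + 1) + ballotNum (k + 2) i := by
  have hm : k + 1 + 2 * (i + 1) = (k + 2 * i + 2) + 1 := by ring
  have hl : k + 2 * (i + 1) = k + 2 * i + 2 := by ring
  have hr : k + 2 + 2 * i = k + 2 * i + 2 := by ring
  rcases i with _ | i
  · simp [ballotNum, Nat.choose_succ_succ]; ring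
  · simp only [ballotNum, hm, hl, hr, Nat.choose_succ_succ, add_eq_zero, one_ne_zero, and_false,
      if_false, Nat.add_sub_cancel]
    push_cast
    ring

lemma ballotNum_zero_succ (i : ℕ) : ballotNum 0 (i + 1) = ballotNum 1 i := by
  have hsymm : (2 * i + 1).choose (i + 1) = (2 * i + 1).choose i := by
    rw [Nat.choose_symm_of_eq_add]; ring
  rcases i with _ | i
  · simp [ballotNum]
  · simp only [ballotNum, show 0 + 2 * (i + 1 + 1) = (2 * (i + 1) + 1) + 1 by ring,
      show 1 + 2 * (i + 1) = 2 * (i + 1) + 1 by ring, Nat.choose_succ_succ (2 * (i + 1) + 1),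
      hsymm, add_eq_zero, one_ne_zero, and_false, if_false, Nat.add_sub_cancel]
    push_cast
    ring

section ClosedForm

variable {R : Type*} [CommRing R] (a b c : R)

def choosePow (n m : ℕ) : R := n.choose m * b ^ (n - m)

lemma choosePow_eq_zero_of_lt {n m : ℕ} (h : n < m) : choosePow b n m = 0 := by
  simp [choosePow, Nat.choose_eq_zero_of_lt h]

lemma choosePow_succ_zero (n : ℕ) : choosePow b (n + 1) 0 = b * choosePow b n 0 := by
  simp [choosePow, pow_succ, mul_comm]

lemma choosePow_succ_succ (n m : ℕ) :
    choosePow b (n + 1) (m + 1) = b * choosePow b n (m + 1) + choosePow b n m := by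
  rcases lt_trichotomy m n with h | rfl | h
  · obtain ⟨d, rfl⟩ := Nat.exists_eq_add_of_lt h
    simp only [choosePow, Nat.choose_succ_succ, show m + d + 1 + 1 - (m + 1) = d + 1 by omega,
      show m + d + 1 - (m + 1) = d by omega, show m + d + 1 - m = d + 1 by omega]
    push_cast
    ring
  · simp [choosePow]
  · simp [choosePow_eq_zero_of_lt b h, choosePow_eq_zero_of_lt b (Nat.lt_succ_of_lt h),
      choosePow_eq_zero_of_lt b (by omega : n + 1 < m + 1)]

def closedTerm (n k i : ℕ) : R :=
  choosePow b n (k + 2 * i) * ballotNum k i * a ^ (k + i) * c ^ i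

lemma closedTerm_eq_zero_of_lt {n k i : ℕ} (h : n < k + 2 * i) : closedTerm a b c n k i = 0 := by
  simp [closedTerm, choosePow_eq_zero_of_lt b h]

lemma closedTerm_succ (n k i : ℕ) :
    closedTerm a b c (n + 1) k i =
      (if k = 0 then 0 else a * closedTerm a b c n (k - 1) i) + b * closedTerm a b c n k i +
        (if i = 0 then 0 else c * closedTerm a b c n (k + 1) (i - 1)) := by
  rcases k with _ | k <;> rcases i with _ | i
  · simp [closedTerm, choosePow_succ_zero, mul_assoc]
  · simp only [closedTerm, show 0 + 2 * (i + 1) = (2 * i + 1) + 1 by ring,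
      show 0 + 1 + 2 * i = 2 * i + 1 by ring, choosePow_succ_succ, ballotNum_zero_succ,
      if_true, if_false, add_eq_zero, one_ne_zero, and_false, Nat.add_sub_cancel]
    push_cast
    ring
  · simp only [closedTerm, show k + 1 + 2 * 0 = k + 1 by ring, show k + 2 * 0 = k by ring,
      choosePow_succ_succ, ballotNum_zero_right, if_true, if_false, add_eq_zero, one_ne_zero,
      and_false, Nat.add_sub_cancel]
    ring
  · simp only [closedTerm, show k + 1 + 2 * (i + 1) = (k + 2 * (i + 1)) + 1 by ring,
      show k + 1 + 1 + 2 * i = k + 2 * (i + 1) by ring, choosePow_succ_succ, ballotNum_succ_succ,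
      if_false, add_eq_zero, one_ne_zero, and_false, Nat.add_sub_cancel]
    push_cast
    ring

def closedForm (n k : ℕ) : R :=
  ∑ i ∈ range (n + 1), closedTerm a b c n k i

lemma closedForm_eq_sum_range {n k N : ℕ} (hN : n < k + 2 * N) :
    closedForm a b c n k = ∑ i ∈ range N, closedTerm a b c n k i := by
  have vanish : ∀ M, n < k + 2 * M → ∀ i ≥ M, closedTerm a b c n k i = 0 :=
    fun M hM i hi => closedTerm_eq_zero_of_lt a b c (by omega)
  rw [closedForm,
    ← eventually_constant_sum (vanish (n + 1) (by omega)) (by omega : n + 1 ≤ N + n + 1),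
    eventually_constant_sum (vanish N hN) (by omega : N ≤ N + n + 1)]

lemma closedForm_zero (k : ℕ) : closedForm a b c 0 k = if k = 0 then 1 else 0 := by
  rcases k with _ | k <;> simp [closedForm, closedTerm, choosePow, ballotNum_zero_right]

lemma closedForm_succ (n k : ℕ) :
    closedForm a b c (n + 1) k =
      (if k = 0 then 0 else a * closedForm a b c n (k - 1)) + b * closedForm a b c n k +
        c * closedForm a b c n (k + 1) := by
  rw [closedForm_eq_sum_range a b c (by omega : n < k - 1 + 2 * (n + 1 + 1)),
    closedForm_eq_sum_range a b c (by omega : n < k + 2 * (n + 1 + 1))]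
  have down_steps : ∑ i ∈ range (n + 1 + 1),
      (if i = 0 then 0 else c * closedTerm a b c n (k + 1) (i - 1)) =
        c * closedForm a b c n (k + 1) := by
    simp [sum_range_succ' _ (n + 1), closedForm, mul_sum]
  rw [closedForm]
  simp only [closedTerm_succ, sum_add_distrib, down_steps, sum_ite_irrel, sum_const_zero, mul_sum]

end ClosedForm

lemma motzkinWeight_eq_closedForm {R : Type*} [CommRing R] (a b c : R) (n k : ℕ) :
    motzkinWeight a b c n k = closedForm a b c n k := by
  induction n generalizing k with
  | zero => simp [motzkinWeight_zero, closedForm_zero]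
  | succ n ih =>
    rw [motzkinWeight_succ a b c n (Int.natCast_nonneg k), closedForm_succ]
    rcases k with _ | k
    · simp [motzkinWeight_of_neg, ← ih]
    · simp [← ih]

theorem weighted_motzkin_paths_general {R : Type*} [CommRing R] (a b c : R) (n k : ℕ) :
    (∑ s ∈ (stepSeqs n).filter
        (fun s => (∀ i ≤ n, 0 ≤ seqHeight 0 s i) ∧ seqHeight 0 s n = (k : ℤ)),
      seqWeight a b c s)
      = ∑ i ∈ Finset.range ((n - k) / 2 + 1),
          (Nat.choose n (k + 2 * i) : R) *
            ((Nat.choose (k + 2 * i) i : R) -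
              (if i = 0 then 0 else (Nat.choose (k + 2 * i) (i - 1) : R))) *
            a ^ (k + i) * b ^ (n - k - 2 * i) * c ^ i := by
  rw [← motzkinWeight, motzkinWeight_eq_closedForm,
    closedForm_eq_sum_range a b c (by omega : n < k + 2 * ((n - k) / 2 + 1))]
  refine sum_congr rfl fun i _ => ?_
  simp only [closedTerm, choosePow, ballotNum, Nat.sub_sub]
  push_cast
  ring

/-- the total weight of weighted Motzkin paths from `(0,0)` to `(n,k)`. -/
theorem weighted_motzkin_paths {R : Type*} [CommRing R] (a b c : R) (n k : ℕ) (hkn : k ≤ n) :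
    (∑ s ∈ (stepSeqs n).filter
        (fun s => (∀ i ≤ n, 0 ≤ seqHeight 0 s i) ∧ seqHeight 0 s n = (k : ℤ)),
      seqWeight a b c s)
      = ∑ i ∈ Finset.range ((n - k) / 2 + 1),
          (Nat.choose n (k + 2 * i) : R) *
            ((Nat.choose (k + 2 * i) i : R) -
              (if i = 0 then 0 else (Nat.choose (k + 2 * i) (i - 1) : R))) *
            a ^ (k + i) * b ^ (n - k - 2 * i) * c ^ i :=
  weighted_motzkin_paths_general a b c n k
end

section
/- Let a, b, c be reals with a > 0, b ≥ 0, c ≥ 0, and let n ≥ 2 be a natural number. Then ∑_{i=0}^{⌊(n−2)/2⌋} C(n−2, 2i)·Cat(i)·a^{i}·b^{n−2−2i}·c^{i+1} = −(1/4)^n/(2·a) · ∑_{r=0}^{n} C(2(n−r), n−r)·C(2r, r)·(b + 2·√(a·c))^{n−r}·(b − 2·√(a·c))^{r} / ((2(n−r) − 1)·(2r − 1)), where the divisors 2(n−r)−1 and 2r−1 are signed integers (equal to −1 when n−r = 0 or r = 0 respectively). -/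
/-!
Put `s = √(ac)`, `p = b + 2s`, `q = b - 2s`. Both sides are read off the power-series square
root of `(1 - pX)(1 - qX) = (1 - bX)² - 4acX²` with constant term `1`, which is unique. The
right-hand side is the coefficient of `X^n` in the product of the binomial expansions of
`√(1 - pX)` and `√(1 - qX)`. For the left-hand side, the weighted Motzkin series
`M = C(acX²/(1 - bX)²)/(1 - bX)`, with `C` the Catalan series, satisfies
`(1 - bX)M = 1 + acX²M²`, so `1 - bX - 2acX²M` is that square root too; its coefficient of `X^n`
is `-2ac` times the Motzkin sum of length `n - 2`.
-/

open Finset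

theorem centralBinom_succ_eq_mul_catalan (k : ℕ) :
    (k + 1).centralBinom = 2 * (2 * k + 1) * catalan k := by
  apply Nat.eq_of_mul_eq_mul_left k.succ_pos
  rw [Nat.succ_mul_centralBinom_succ, ← succ_mul_catalan_eq_centralBinom, Nat.succ_eq_add_one]
  ring

theorem one_sub_two_mul_natCast_ne_zero {R : Type*} [CommRing R] [CharZero R] (k : ℕ) :
    (1 - 2 * k : R) ≠ 0 := by
  have h : ((2 * k : ℕ) : R) ≠ ((1 : ℕ) : R) := Nat.cast_injective.ne (by omega)
  push_cast at h
  contrapose! h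
  linear_combination -h

noncomputable def weightedMotzkin {R : Type*} [CommRing R] (b w : R) (m : ℕ) : R :=
  ∑ k ∈ range (m / 2 + 1), (m.choose (2 * k) : R) * catalan k * w ^ k * b ^ (m - 2 * k)

namespace PowerSeries

variable {R : Type*} [CommRing R]

noncomputable def catalanSeriesOf (R : Type*) [CommRing R] : R⟦X⟧ :=
  map (Nat.castRingHom R) catalanSeries

theorem coeff_catalanSeriesOf (n : ℕ) : coeff n (catalanSeriesOf R) = catalan n := by
  simp [catalanSeriesOf]

theorem catalanSeriesOf_eq : catalanSeriesOf R = 1 + X * catalanSeriesOf R ^ 2 := by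
  have h := congrArg (map (Nat.castRingHom R)) catalanSeries_sq_mul_X_add_one
  simp only [map_add, map_mul, map_pow, map_X, map_one] at h
  unfold catalanSeriesOf
  nth_rw 1 [← h]
  ring

theorem X_pow_dvd_sub_sum (f : R⟦X⟧) (N : ℕ) :
    X ^ N ∣ f - ∑ d ∈ range N, C (coeff d f) * X ^ d := by
  rw [X_pow_dvd_iff]
  intro m hm
  simp [coeff_X_pow, hm]

theorem pow_dvd_subst_sub_sum (f : R⟦X⟧) {g : R⟦X⟧} (hg : constantCoeff g = 0) (N : ℕ) :
    g ^ N ∣ f.subst g - ∑ d ∈ range N, C (coeff d f) * g ^ d := by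
  obtain ⟨rest, hrest⟩ := X_pow_dvd_sub_sum f N
  have hsubst := HasSubst.of_constantCoeff_zero' hg
  have h := congrArg (substAlgHom hsubst) hrest
  simp only [map_sub, map_sum, map_mul, map_pow, coe_substAlgHom, subst_X hsubst, subst_C] at h
  exact ⟨_, h⟩

theorem rescale_mk_one_mul_one_sub (b : R) : rescale b (mk 1) * (1 - C b * X) = 1 := by
  simpa [rescale_X] using congrArg (rescale b) (mk_one_mul_one_sub_eq_one R)

theorem coeff_X_pow_mul_rescale_mk_one_pow (b : R) (k m : ℕ) :
    coeff m (X ^ k * rescale b (mk 1) ^ (k + 1)) =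
      if k ≤ m then (m.choose k : R) * b ^ (m - k) else 0 := by
  rw [← map_pow, mk_one_pow_eq_mk_choose_add, coeff_X_pow_mul']
  split_ifs with h
  · rw [coeff_rescale, coeff_mk, Nat.add_sub_cancel' h, mul_comm]
  · rfl

/-- The generating function of Motzkin paths whose level steps have weight `b` and whose
up-down pairs have weight `w`. -/
noncomputable def motzkinSeries (b w : R) : R⟦X⟧ :=
  rescale b (mk 1) * (catalanSeriesOf R).subst (C w * X ^ 2 * rescale b (mk 1) ^ 2)

theorem coeff_motzkinSeries (b w : R) (m : ℕ) :
    coeff m (motzkinSeries b w) = weightedMotzkin b w m := by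
  set u := rescale b (mk 1)
  set Z : R⟦X⟧ := C w * X ^ 2 * u ^ 2
  have hZ : constantCoeff Z = 0 := by simp [Z]
  set N := m / 2 + 1
  -- `Z` is divisible by `X ^ 2`, so only the first `N` Catalan terms reach `X ^ m`.
  obtain ⟨rest, hrest⟩ := pow_dvd_subst_sub_sum (catalanSeriesOf R) hZ N
  have htrunc : motzkinSeries b w =
      ∑ d ∈ range N, C ((catalan d : R) * w ^ d) * (X ^ (2 * d) * u ^ (2 * d + 1)) +
        X ^ (2 * N) * (C (w ^ N) * u ^ (2 * N + 1) * rest) := by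
    rw [motzkinSeries, eq_add_of_sub_eq' hrest]
    simp only [Z, coeff_catalanSeriesOf, mul_add, mul_sum, map_mul, map_pow]
    congr 1
    · exact sum_congr rfl fun d _ => by ring
    · ring
  rw [htrunc, map_add, coeff_X_pow_mul', if_neg (by omega), add_zero, map_sum, weightedMotzkin]
  refine sum_congr rfl fun d hd => ?_
  rw [coeff_C_mul, coeff_X_pow_mul_rescale_mk_one_pow,
    if_pos (by simp only [mem_range] at hd; omega)]
  ring

theorem one_sub_mul_motzkinSeries (b w : R) :
    (1 - C b * X) * motzkinSeries b w = 1 + C w * X ^ 2 * motzkinSeries b w ^ 2 := by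
  set Z : R⟦X⟧ := C w * X ^ 2 * rescale b (mk 1) ^ 2
  have hZ : HasSubst Z := HasSubst.of_constantCoeff_zero' (by simp [Z])
  have hK := congrArg (substAlgHom hZ) (catalanSeriesOf_eq (R := R))
  simp only [map_add, map_mul, map_pow, map_one, coe_substAlgHom, subst_X hZ] at hK
  rw [motzkinSeries, ← mul_assoc, mul_comm (1 - C b * X), rescale_mk_one_mul_one_sub, one_mul]
  linear_combination hK

theorem sq_one_sub_sub_motzkinSeries (b w : R) :
    (1 - C b * X - 2 * C w * X ^ 2 * motzkinSeries b w) ^ 2 =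
      (1 - C b * X) ^ 2 - 4 * C w * X ^ 2 := by
  linear_combination (-4 * C w * X ^ 2) * one_sub_mul_motzkinSeries b w

noncomputable def sqrtOneSubFourX (R : Type*) [CommRing R] : R⟦X⟧ :=
  1 - 2 * X * catalanSeriesOf R

theorem sqrtOneSubFourX_sq : sqrtOneSubFourX R ^ 2 = 1 - 4 * X := by
  rw [sqrtOneSubFourX]
  linear_combination (-4 * X) * catalanSeriesOf_eq (R := R)

theorem constantCoeff_sqrtOneSubFourX : constantCoeff (sqrtOneSubFourX R) = 1 := by
  simp [sqrtOneSubFourX]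

theorem coeff_sqrtOneSubFourX {K : Type*} [Field K] [CharZero K] (k : ℕ) :
    coeff k (sqrtOneSubFourX K) = ((2 * k).choose k : K) / (1 - 2 * k) := by
  rcases k with _ | k
  · simp [sqrtOneSubFourX]
  · rw [eq_div_iff (one_sub_two_mul_natCast_ne_zero _), ← Nat.centralBinom_eq_two_mul_choose,
      centralBinom_succ_eq_mul_catalan, sqrtOneSubFourX, map_sub, coeff_one,
      if_neg k.succ_ne_zero, mul_comm 2 X, mul_assoc, coeff_succ_X_mul, ← map_ofNat C 2,
      coeff_C_mul, coeff_catalanSeriesOf]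
    push_cast
    ring

theorem eq_of_sq_eq_of_constantCoeff {K : Type*} [CommRing K] [IsDomain K] [NeZero (2 : K)]
    {f g : K⟦X⟧} (h : f ^ 2 = g ^ 2) (hf : constantCoeff f = 1) (hg : constantCoeff g = 1) :
    f = g := by
  refine (sq_eq_sq_iff_eq_or_eq_neg.mp h).resolve_right fun hfg => two_ne_zero (α := K) ?_
  have h0 := congrArg constantCoeff hfg
  rw [hf, map_neg, hg] at h0
  linear_combination h0

theorem one_sub_sub_motzkinSeries_eq {K : Type*} [Field K] [NeZero (2 : K)] (b s : K) :
    1 - C b * X - 2 * C (s ^ 2) * X ^ 2 * motzkinSeries b (s ^ 2) =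
      rescale ((b + 2 * s) / 4) (sqrtOneSubFourX K) *
        rescale ((b - 2 * s) / 4) (sqrtOneSubFourX K) := by
  have h4 : (4 : K) ≠ 0 := by
    rw [show (4 : K) = 2 * 2 by norm_num]
    exact mul_ne_zero two_ne_zero two_ne_zero
  have hC (t : K) : 4 * C (t / 4) = C t := by
    rw [← map_ofNat C 4, ← map_mul, mul_div_cancel₀ t h4]
  apply eq_of_sq_eq_of_constantCoeff
  · rw [sq_one_sub_sub_motzkinSeries, mul_pow, ← map_pow, ← map_pow, sqrtOneSubFourX_sq]
    simp only [map_sub, map_one, map_mul, rescale_X, map_ofNat, ← mul_assoc, hC, map_add, map_pow]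
    ring
  · simp
  · simp only [map_mul, ← coeff_zero_eq_constantCoeff_apply, coeff_rescale, pow_zero, one_mul]
    rw [coeff_zero_eq_constantCoeff_apply, constantCoeff_sqrtOneSubFourX, one_mul]

theorem coeff_add_two_rescale_sqrtOneSubFourX_mul {K : Type*} [Field K] [NeZero (2 : K)]
    (b s : K) (m : ℕ) :
    coeff (m + 2) (rescale ((b + 2 * s) / 4) (sqrtOneSubFourX K) *
        rescale ((b - 2 * s) / 4) (sqrtOneSubFourX K)) =
      -2 * s ^ 2 * weightedMotzkin b (s ^ 2) m := by
  rw [← one_sub_sub_motzkinSeries_eq, ← coeff_motzkinSeries]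
  simp only [map_pow, mul_assoc, map_sub, coeff_one, Nat.add_eq_zero_iff, OfNat.ofNat_ne_zero,
    and_false, ↓reduceIte, coeff_succ_mul_X, coeff_succ_C, sub_self, zero_sub, neg_mul, neg_inj]
  rw [← map_ofNat C 2, ← map_pow, coeff_C_mul, coeff_C_mul, coeff_X_pow_mul', if_pos (by omega),
    Nat.add_sub_cancel]

theorem sum_choose_div_eq_coeff {K : Type*} [Field K] [CharZero K] (p q : K) (n : ℕ) :
    ∑ r ∈ range (n + 1), ((2 * (n - r)).choose (n - r) : K) * ((2 * r).choose r : K) *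
        p ^ (n - r) * q ^ r / (((2 * ((n : ℤ) - r) - 1) * (2 * r - 1) : ℤ) : K) =
      4 ^ n * coeff n (rescale (p / 4) (sqrtOneSubFourX K) *
        rescale (q / 4) (sqrtOneSubFourX K)) := by
  rw [mul_comm (rescale (p / 4) _), coeff_mul,
    Nat.sum_antidiagonal_eq_sum_range_succ fun i j =>
      coeff i (rescale (q / 4) (sqrtOneSubFourX K)) * coeff j (rescale (p / 4) (sqrtOneSubFourX K)),
    mul_sum]
  refine sum_congr rfl fun r hr => ?_
  have hrn : r ≤ n := Nat.lt_succ_iff.mp (mem_range.mp hr)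
  have hcast : (((2 * ((n : ℤ) - r) - 1) * (2 * r - 1) : ℤ) : K) =
      (1 - 2 * ((n - r : ℕ) : K)) * (1 - 2 * (r : K)) := by
    push_cast [Nat.cast_sub hrn]
    ring
  have h4 : (4 : K) ^ n = 4 ^ (n - r) * 4 ^ r := by rw [← pow_add, Nat.sub_add_cancel hrn]
  have h1 := one_sub_two_mul_natCast_ne_zero (R := K) (n - r)
  have h2 := one_sub_two_mul_natCast_ne_zero (R := K) r
  rw [hcast, h4, coeff_rescale, coeff_rescale, coeff_sqrtOneSubFourX, coeff_sqrtOneSubFourX,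
    div_pow, div_pow]
  field_simp

end PowerSeries

theorem ruin_probability_closed_form_general (a b c : ℝ) (ha : 0 < a) (hc : 0 ≤ c)
    (n : ℕ) (hn : 2 ≤ n) :
    (∑ i ∈ Finset.range ((n - 2) / 2 + 1),
        (Nat.choose (n - 2) (2 * i) : ℝ) * (catalan i : ℝ) *
          a ^ i * b ^ (n - 2 - 2 * i) * c ^ (i + 1))
      = -(1 / 4 : ℝ) ^ n / (2 * a) *
          ∑ r ∈ Finset.range (n + 1),
            (Nat.choose (2 * (n - r)) (n - r) : ℝ) * (Nat.choose (2 * r) r : ℝ) *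
              (b + 2 * Real.sqrt (a * c)) ^ (n - r) * (b - 2 * Real.sqrt (a * c)) ^ r /
                (((2 * ((n : ℤ) - (r : ℤ)) - 1) * (2 * (r : ℤ) - 1) : ℤ) : ℝ) := by
  obtain ⟨m, rfl⟩ := Nat.exists_eq_add_of_le' hn
  have hs : Real.sqrt (a * c) ^ 2 = a * c := Real.sq_sqrt (mul_nonneg ha.le hc)
  have hlhs : (∑ i ∈ range ((m + 2 - 2) / 2 + 1), (Nat.choose (m + 2 - 2) (2 * i) : ℝ) *
      (catalan i : ℝ) * a ^ i * b ^ (m + 2 - 2 - 2 * i) * c ^ (i + 1)) =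
      c * weightedMotzkin b (a * c) m := by
    rw [Nat.add_sub_cancel, weightedMotzkin, mul_sum]
    exact sum_congr rfl fun i _ => by ring
  rw [hlhs, PowerSeries.sum_choose_div_eq_coeff,
    PowerSeries.coeff_add_two_rescale_sqrtOneSubFourX_mul, hs, one_div, inv_pow]
  field_simp

/-- the gambler's-ruin probability `P_{n,0}` (weighted Motzkin form, LHS) equals
the closed form obtained from a double binomial expansion of the ruin generating function. -/
theorem ruin_probability_closed_form (a b c : ℝ) (ha : 0 < a) (hb : 0 ≤ b) (hc : 0 ≤ c)
    (n : ℕ) (hn : 2 ≤ n) :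
    (∑ i ∈ Finset.range ((n - 2) / 2 + 1),
        (Nat.choose (n - 2) (2 * i) : ℝ) * (catalan i : ℝ) *
          a ^ i * b ^ (n - 2 - 2 * i) * c ^ (i + 1))
      = -(1 / 4 : ℝ) ^ n / (2 * a) *
          ∑ r ∈ Finset.range (n + 1),
            (Nat.choose (2 * (n - r)) (n - r) : ℝ) * (Nat.choose (2 * r) r : ℝ) *
              (b + 2 * Real.sqrt (a * c)) ^ (n - r) * (b - 2 * Real.sqrt (a * c)) ^ r /
                (((2 * ((n : ℤ) - (r : ℤ)) - 1) * (2 * (r : ℤ) - 1) : ℤ) : ℝ) :=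
  ruin_probability_closed_form_general a b c ha hc n hn
end

section
/- Let μ1 ∈ [0, 1) and μ0 = 1 − μ1. Let p : ℕ → ℕ → ℝ satisfy p 1 0 = 1, p 1 m = 0 for all m ≥ 1, and for all k ≥ 2 and m ≥ 0: p k m = ((m−1) + (k−m)·μ1)/(k−1) · p (k−1) (m−1) + ((k−1−m)/(k−1))·μ0 · p (k−1) m, where the first term is taken to be 0 when m = 0. Then for all k ≥ 1 and 0 ≤ m ≤ k−1: p k m = μ0^{k−1} · ∑_{1 ≤ i_1 < i_2 < ⋯ < i_m ≤ k−1} ∏_{j=1}^{m} ((j−1) + i_j·(μ1/μ0)) / (k−j), where the sum ranges over all strictly increasing m-tuples of integers in {1, …, k−1} and for m = 0 the empty sum/product is 1. -/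
/-!
Write `r = μ1 / μ0` and `T n m = ∑_{1 ≤ i_1 < ⋯ < i_m ≤ n} ∏_j ((j - 1) + i_j r)`.
Splitting on whether `i_m = n` gives the Pascal-type recurrence
`T n m = ((m - 1) + n r) T (n-1) (m-1) + T (n-1) m`.
The denominators of the claimed formula multiply to the falling factorial `(k-1)(k-2)⋯(k-m)`,
and after clearing them the claim reads `(k-1)(k-2)⋯(k-m) · p k m = μ0^(k-1) T (k-1) m`.
Multiplied by that falling factorial, the recurrence of `p` becomes `μ0^(k-1)` times the
recurrence of `T`, because `(m - 1) + (k - m) μ1 = μ0 ((m - 1) + (k - 1) r)`.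
-/

open Finset

theorem Fin.strictMono_snoc_iff {α : Type*} [Preorder α] {n : ℕ} {f : Fin n → α} {a : α} :
    StrictMono (Fin.snoc f a : Fin (n + 1) → α) ↔ StrictMono f ∧ ∀ j, f j < a := by
  rw [← Fin.insertNth_last', Fin.strictMono_insertNth_iff]
  simp [Fin.castSucc_lt_last]

theorem Nat.prod_fin_natCast_sub_eq_descFactorial {R : Type*} [CommRing R] (n m : ℕ) :
    ∏ j : Fin m, ((n : R) - j) = n.descFactorial m := by
  rw [← descPochhammer_eval_eq_descFactorial, descPochhammer_eval_eq_prod_range,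
    Fin.prod_univ_eq_prod_range (fun j => (n : R) - j)]

theorem Nat.cast_descFactorial_succ {R : Type*} [CommRing R] (n m : ℕ) :
    (n.descFactorial (m + 1) : R) = (n - m) * n.descFactorial m := by
  rw [← descPochhammer_eval_eq_descFactorial, descPochhammer_succ_eval,
    descPochhammer_eval_eq_descFactorial, mul_comm]

def strictMonoTuples (n m : ℕ) : Finset (Fin m → ℕ) :=
  (Fintype.piFinset fun _ : Fin m => Icc 1 n).filter StrictMono

theorem mem_strictMonoTuples {n m : ℕ} {i : Fin m → ℕ} :
    i ∈ strictMonoTuples n m ↔ (∀ j, i j ∈ Icc 1 n) ∧ StrictMono i := by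
  simp [strictMonoTuples]

theorem strictMonoTuples_zero_succ (m : ℕ) : strictMonoTuples 0 (m + 1) = ∅ := by
  simp [strictMonoTuples]

theorem strictMonoTuples_filter_last_ne (n m : ℕ) :
    (strictMonoTuples (n + 1) (m + 1)).filter (fun i => ¬i (Fin.last m) = n + 1) =
      strictMonoTuples n (m + 1) := by
  ext i
  simp only [mem_filter, mem_strictMonoTuples, mem_Icc]
  constructor
  · rintro ⟨⟨hbound, hmono⟩, hlast⟩
    refine ⟨fun j => ⟨(hbound j).1, ?_⟩, hmono⟩
    have := hmono.monotone (Fin.le_last j)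
    have := (hbound (Fin.last m)).2
    omega
  · rintro ⟨hbound, hmono⟩
    refine ⟨⟨fun j => ⟨(hbound j).1, by have := (hbound j).2; omega⟩, hmono⟩, ?_⟩
    have := (hbound (Fin.last m)).2
    omega

theorem snoc_mem_strictMonoTuples_iff {n m : ℕ} {i : Fin m → ℕ} :
    (Fin.snoc i (n + 1) : Fin (m + 1) → ℕ) ∈ strictMonoTuples (n + 1) (m + 1) ↔
      i ∈ strictMonoTuples n m := by
  simp only [mem_strictMonoTuples, mem_Icc, Fin.forall_fin_succ', Fin.snoc_castSucc,
    Fin.snoc_last, Fin.strictMono_snoc_iff]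
  constructor
  · rintro ⟨⟨hbound, -⟩, hmono, hlt⟩
    exact ⟨fun j => ⟨(hbound j).1, by have := hlt j; omega⟩, hmono⟩
  · rintro ⟨hbound, hmono⟩
    exact ⟨⟨fun j => ⟨(hbound j).1, by have := (hbound j).2; omega⟩, by omega⟩, hmono,
      fun j => by have := (hbound j).2; omega⟩

/-- `∑_{1 ≤ i_1 < ⋯ < i_m ≤ n} ∏_j ((j - 1) + i_j r)`, with `j` shifted to start at `0`. -/
def luriaDelbruckSum {R : Type*} [CommSemiring R] (r : R) (n m : ℕ) : R :=
  ∑ i ∈ strictMonoTuples n m, ∏ j : Fin m, ((j : ℕ) + (i j : R) * r)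

section luriaDelbruckSum

variable {R : Type*} [CommSemiring R] (r : R)

theorem luriaDelbruckSum_zero_right (n : ℕ) : luriaDelbruckSum r n 0 = 1 := by
  simp [luriaDelbruckSum, strictMonoTuples, Subsingleton.strictMono]

theorem luriaDelbruckSum_zero_succ (m : ℕ) : luriaDelbruckSum r 0 (m + 1) = 0 := by
  simp [luriaDelbruckSum, strictMonoTuples_zero_succ]

theorem luriaDelbruckSum_succ_succ (n m : ℕ) :
    luriaDelbruckSum r (n + 1) (m + 1) =
      (m + (n + 1) * r) * luriaDelbruckSum r n m + luriaDelbruckSum r n (m + 1) := by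
  unfold luriaDelbruckSum
  rw [← sum_filter_add_sum_filter_not _ (fun i => i (Fin.last m) = n + 1),
    strictMonoTuples_filter_last_ne, mul_sum]
  congr 1
  refine sum_nbij' Fin.init (fun i => Fin.snoc i (n + 1)) ?_ ?_ ?_ ?_ ?_
  · intro i hi
    obtain ⟨hmem, hlast⟩ := mem_filter.1 hi
    rwa [← Fin.snoc_init_self i, hlast, snoc_mem_strictMonoTuples_iff] at hmem
  · intro i hi
    exact mem_filter.2 ⟨snoc_mem_strictMonoTuples_iff.2 hi, Fin.snoc_last _ _⟩
  · intro i hi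
    rw [← (mem_filter.1 hi).2, Fin.snoc_init_self]
  · intro i _
    exact Fin.init_snoc _ _
  · intro i hi
    rw [Fin.prod_univ_castSucc, (mem_filter.1 hi).2, mul_comm]
    simp [Fin.init]

end luriaDelbruckSum

theorem descFactorial_mul_eq_luriaDelbruckSum {μ1 μ0 : ℝ} (hμ0 : μ0 = 1 - μ1) (hμ0_ne : μ0 ≠ 0)
    {p : ℕ → ℕ → ℝ} (hp10 : p 1 0 = 1)
    (hrec : ∀ k, 2 ≤ k → ∀ m,
      p k m = (if m = 0 then 0 else
            ((((m : ℝ) - 1) + ((k : ℝ) - (m : ℝ)) * μ1) / ((k : ℝ) - 1)) * p (k - 1) (m - 1))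
          + ((((k : ℝ) - 1 - (m : ℝ)) / ((k : ℝ) - 1)) * μ0) * p (k - 1) m)
    (n m : ℕ) :
    (n.descFactorial m : ℝ) * p (n + 1) m = μ0 ^ n * luriaDelbruckSum (μ1 / μ0) n m := by
  -- keeps `field_simp` from clearing the denominator `μ0` inside `r`
  set r := μ1 / μ0 with hr
  induction n generalizing m with
  | zero =>
    cases m with
    | zero => simp [hp10, luriaDelbruckSum_zero_right]
    | succ m => simp [luriaDelbruckSum_zero_succ]
  | succ n ih =>
    have hn : (n : ℝ) + 1 ≠ 0 := by positivity
    cases m with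
    | zero =>
      have hstep : p (n + 2) 0 = μ0 * p (n + 1) 0 := by
        rw [hrec (n + 2) (by omega) 0, if_pos rfl, Nat.cast_zero, sub_zero, zero_add,
          div_self (by push_cast; linarith), one_mul]
        rfl
      have h0 := ih 0
      simp only [Nat.descFactorial_zero, Nat.cast_one, one_mul, luriaDelbruckSum_zero_right,
        mul_one] at h0 ⊢
      rw [hstep, h0, pow_succ, mul_comm]
    | succ m =>
      have hstep : p (n + 2) (m + 1) = (m + (n + 1 - m) * μ1) / (n + 1) * p (n + 1) m
          + (n - m) / (n + 1) * μ0 * p (n + 1) (m + 1) := by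
        rw [hrec (n + 2) (by omega) (m + 1), if_neg m.succ_ne_zero]
        push_cast
        ring_nf
      have hcoef : (m : ℝ) + (n + 1 - m) * μ1 = μ0 * (m + (n + 1) * r) := by
        rw [hr]
        field_simp
        rw [hμ0]
        ring
      have h0 := ih m
      have h1 := ih (m + 1)
      rw [Nat.cast_descFactorial_succ] at h1
      rw [hstep, Nat.succ_descFactorial_succ, luriaDelbruckSum_succ_succ]
      push_cast
      field_simp
      linear_combination
        (m + (n + 1 - m) * μ1) * h0 + μ0 * h1 + μ0 ^ n * luriaDelbruckSum r n m * hcoef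

theorem luria_delbruck_exact_general (μ1 μ0 : ℝ) (hμ1' : μ1 < 1) (hμ0 : μ0 = 1 - μ1)
    (p : ℕ → ℕ → ℝ)
    (hp10 : p 1 0 = 1)
    (hrec : ∀ k, 2 ≤ k → ∀ m,
      p k m = (if m = 0 then 0 else
            ((((m : ℝ) - 1) + ((k : ℝ) - (m : ℝ)) * μ1) / ((k : ℝ) - 1)) * p (k - 1) (m - 1))
          + ((((k : ℝ) - 1 - (m : ℝ)) / ((k : ℝ) - 1)) * μ0) * p (k - 1) m) :
    ∀ k, 1 ≤ k → ∀ m, m ≤ k - 1 →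
      p k m = μ0 ^ (k - 1) *
        ∑ i ∈ (Fintype.piFinset (fun _ : Fin m => Finset.Icc 1 (k - 1))).filter
            (fun i => StrictMono i),
          ∏ j : Fin m,
            (((j : ℕ) : ℝ) + (i j : ℝ) * (μ1 / μ0)) / ((k : ℝ) - (((j : ℕ) : ℝ) + 1)) := by
  intro k hk m hm
  obtain ⟨n, rfl⟩ : ∃ n, k = n + 1 := ⟨k - 1, by omega⟩
  rw [Nat.add_sub_cancel] at hm ⊢
  have hμ0_ne : μ0 ≠ 0 := by rw [hμ0]; linarith
  have hdenom : ∏ j : Fin m, (((n + 1 : ℕ) : ℝ) - (((j : ℕ) : ℝ) + 1)) = n.descFactorial m := by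
    rw [← Nat.prod_fin_natCast_sub_eq_descFactorial]
    push_cast
    ring_nf
  have hD : (n.descFactorial m : ℝ) ≠ 0 := by
    exact_mod_cast (Nat.descFactorial_pos.2 hm).ne'
  simp_rw [prod_div_distrib, ← sum_div, hdenom]
  rw [mul_div_assoc', eq_div_iff hD, mul_comm,
    descFactorial_mul_eq_luriaDelbruckSum hμ0 hμ0_ne hp10 hrec n m]
  rfl

/-- the exact Luria–Delbrück distribution indexed by population size.
`p k m` is the probability of `m` mutants among `k` cells; the strictly increasing tuples
`1 ≤ i_1 < … < i_m ≤ k-1` are encoded as strictly monotone functions `Fin m → ℕ` with values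
in `Icc 1 (k-1)`. -/
theorem luria_delbruck_exact (μ1 μ0 : ℝ) (hμ1 : 0 ≤ μ1) (hμ1' : μ1 < 1) (hμ0 : μ0 = 1 - μ1)
    (p : ℕ → ℕ → ℝ)
    (hp10 : p 1 0 = 1) (hp1 : ∀ m, 1 ≤ m → p 1 m = 0)
    (hrec : ∀ k, 2 ≤ k → ∀ m,
      p k m = (if m = 0 then 0 else
            ((((m : ℝ) - 1) + ((k : ℝ) - (m : ℝ)) * μ1) / ((k : ℝ) - 1)) * p (k - 1) (m - 1))
          + ((((k : ℝ) - 1 - (m : ℝ)) / ((k : ℝ) - 1)) * μ0) * p (k - 1) m) :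
    ∀ k, 1 ≤ k → ∀ m, m ≤ k - 1 →
      p k m = μ0 ^ (k - 1) *
        ∑ i ∈ (Fintype.piFinset (fun _ : Fin m => Finset.Icc 1 (k - 1))).filter
            (fun i => StrictMono i),
          ∏ j : Fin m,
            (((j : ℕ) : ℝ) + (i j : ℝ) * (μ1 / μ0)) / ((k : ℝ) - (((j : ℕ) : ℝ) + 1)) :=
  luria_delbruck_exact_general μ1 μ0 hμ1' hμ0 p hp10 hrec
end

section
/- Let μ1 ∈ [0, 1) and μ0 = 1 − μ1. Let p : ℕ → ℕ → ℝ satisfy p 1 0 = 1, p 1 m = 0 for m ≥ 1, p k m = 0 for m ≥ k, ∑_{m=0}^{k−1} p k m = 1 for all k ≥ 1, and for all k ≥ 2, m ≥ 0: p k m = ((m−1) + (k−m)·μ1)/(k−1) · p (k−1) (m−1) + ((k−1−m)/(k−1))·μ0 · p (k−1) m (first term taken as 0 when m = 0). Define E1 k = ∑_{m=0}^{k−1} m·(p k m) and E2 k = ∑_{m=0}^{k−1} m²·(p k m). Then E1 1 = 0, E2 1 = 0, and for all k ≥ 2: E1 k = μ1 + E1 (k−1)·(1 + μ0/(k−1))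 and E2 k = μ1 + E1 (k−1)·(2 − μ0·(2k−3)/(k−1)) + E2 (k−1)·(1 + 2·μ0/(k−1)). -/
/-!
Conditioning on the composition at size `k - 1`, the recursion for `p` says that
`∑ m, w m * p k m = ∑ j, (T w) j * p (k - 1) j` with
`(T w) j = w (j + 1) * gainProb μ1 k (j + 1) + w j * keepProb μ0 k j`.
For `w m = m` and `w m = m ^ 2` the function `T w` is a polynomial of degree at most two in `j`
whose constant term is `μ1`, so both moments at size `k` are affine combinations of the total
mass (which is `1`) and the moments at size `k - 1`.
-/

open Finset

namespace LuriaDelbruck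

noncomputable def gainProb (μ1 : ℝ) (k m : ℕ) : ℝ := (((m : ℝ) - 1) + ((k : ℝ) - m) * μ1) / ((k : ℝ) - 1)

noncomputable def keepProb (μ0 : ℝ) (k m : ℕ) : ℝ := ((k : ℝ) - 1 - m) / ((k : ℝ) - 1) * μ0

theorem sum_range_succ_mul_eq_of_step {a b q r w : ℕ → ℝ} {n : ℕ}
    (hq : ∀ m, q m = (if m = 0 then 0 else a m * r (m - 1)) + b m * r m)
    (hr : r n = 0) (hw : w 0 = 0) :
    ∑ m ∈ range (n + 1), w m * q m = ∑ j ∈ range n, (w (j + 1) * a (j + 1) + w j * b j) * r j := by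
  simp only [hq, mul_add, sum_add_distrib]
  rw [sum_range_succ' (fun m => w m * _), sum_range_succ (fun m => w m * (b m * r m))]
  simp only [hw, hr, Nat.succ_ne_zero, if_false, Nat.add_sub_cancel, zero_mul, mul_zero, add_zero,
    ← sum_add_distrib]
  exact sum_congr rfl fun j _ => by ring

theorem sum_range_succ_mul_eq_of_quadratic {a b q r w : ℕ → ℝ} {n : ℕ} {c₀ c₁ c₂ : ℝ}
    (hq : ∀ m, q m = (if m = 0 then 0 else a m * r (m - 1)) + b m * r m)
    (hr : r n = 0) (hmass : ∑ j ∈ range n, r j = 1) (hw : w 0 = 0)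
    (hT : ∀ j : ℕ, w (j + 1) * a (j + 1) + w j * b j = c₀ + c₁ * j + c₂ * (j : ℝ) ^ 2) :
    ∑ m ∈ range (n + 1), w m * q m =
      c₀ + c₁ * ∑ j ∈ range n, (j : ℝ) * r j + c₂ * ∑ j ∈ range n, (j : ℝ) ^ 2 * r j := by
  rw [sum_range_succ_mul_eq_of_step hq hr hw, mul_sum, mul_sum, ← mul_one c₀, ← hmass, mul_sum,
    ← sum_add_distrib, ← sum_add_distrib]
  exact sum_congr rfl fun j _ => by rw [hT]; ring

section Coefficients

variable (μ1 : ℝ) {k : ℕ} (hk : (k : ℝ) ≠ 1) (j : ℕ)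
include hk

theorem id_mul_gainProb_add_keepProb :
    ((j + 1 : ℕ) : ℝ) * gainProb μ1 k (j + 1) + (j : ℝ) * keepProb (1 - μ1) k j =
      μ1 + (1 + (1 - μ1) / ((k : ℝ) - 1)) * j + 0 * (j : ℝ) ^ 2 := by
  have : (k : ℝ) - 1 ≠ 0 := sub_ne_zero.mpr hk
  simp only [gainProb, keepProb]
  push_cast
  field_simp
  ring

theorem sq_mul_gainProb_add_keepProb :
    ((j + 1 : ℕ) : ℝ) ^ 2 * gainProb μ1 k (j + 1) + (j : ℝ) ^ 2 * keepProb (1 - μ1) k j =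
      μ1 + (2 - (1 - μ1) * (2 * (k : ℝ) - 3) / ((k : ℝ) - 1)) * j
        + (1 + 2 * (1 - μ1) / ((k : ℝ) - 1)) * (j : ℝ) ^ 2 := by
  have : (k : ℝ) - 1 ≠ 0 := sub_ne_zero.mpr hk
  simp only [gainProb, keepProb]
  push_cast
  field_simp
  ring

end Coefficients

end LuriaDelbruck

open LuriaDelbruck

theorem luria_delbruck_moments_general (μ1 μ0 : ℝ) (hμ0 : μ0 = 1 - μ1)
    (p : ℕ → ℕ → ℝ)
    (hzero : ∀ k m, k ≤ m → p k m = 0)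
    (hnorm : ∀ k, 1 ≤ k → ∑ m ∈ Finset.range k, p k m = 1)
    (hrec : ∀ k, 2 ≤ k → ∀ m,
      p k m = (if m = 0 then 0 else
            ((((m : ℝ) - 1) + ((k : ℝ) - (m : ℝ)) * μ1) / ((k : ℝ) - 1)) * p (k - 1) (m - 1))
          + ((((k : ℝ) - 1 - (m : ℝ)) / ((k : ℝ) - 1)) * μ0) * p (k - 1) m)
    (E1 E2 : ℕ → ℝ)
    (hE1 : ∀ k, E1 k = ∑ m ∈ Finset.range k, (m : ℝ) * p k m)
    (hE2 : ∀ k, E2 k = ∑ m ∈ Finset.range k, (m : ℝ) ^ 2 * p k m) :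
    E1 1 = 0 ∧ E2 1 = 0 ∧
      ∀ k, 2 ≤ k →
        E1 k = μ1 + E1 (k - 1) * (1 + μ0 / ((k : ℝ) - 1)) ∧
        E2 k = μ1 + E1 (k - 1) * (2 - μ0 * (2 * (k : ℝ) - 3) / ((k : ℝ) - 1))
            + E2 (k - 1) * (1 + 2 * μ0 / ((k : ℝ) - 1)) := by
  refine ⟨by simp [hE1], by simp [hE2], fun k hk => ?_⟩
  obtain ⟨n, rfl⟩ : ∃ n, k = n + 1 := ⟨k - 1, by omega⟩
  subst hμ0
  have hk1 : ((n + 1 : ℕ) : ℝ) ≠ 1 := by norm_cast; omega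
  have hstep : ∀ m, p (n + 1) m = (if m = 0 then 0 else
      gainProb μ1 (n + 1) m * p n (m - 1)) + keepProb (1 - μ1) (n + 1) m * p n m :=
    hrec (n + 1) hk
  have hmass := hnorm n (by omega)
  have hpn := hzero n n le_rfl
  rw [Nat.add_sub_cancel, hE1, hE1, hE2, hE2]
  constructor
  · rw [sum_range_succ_mul_eq_of_quadratic hstep hpn hmass (by simp) (id_mul_gainProb_add_keepProb μ1 hk1)]
    ring
  · rw [sum_range_succ_mul_eq_of_quadratic hstep hpn hmass (by simp) (sq_mul_gainProb_add_keepProb μ1 hk1)]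
    ring

/-- the first and second moments of the exact Luria–Delbrück distribution
satisfy the stated recursions. -/
theorem luria_delbruck_moments (μ1 μ0 : ℝ) (hμ1 : 0 ≤ μ1) (hμ1' : μ1 < 1) (hμ0 : μ0 = 1 - μ1)
    (p : ℕ → ℕ → ℝ)
    (hp10 : p 1 0 = 1) (hp1 : ∀ m, 1 ≤ m → p 1 m = 0)
    (hzero : ∀ k m, k ≤ m → p k m = 0)
    (hnorm : ∀ k, 1 ≤ k → ∑ m ∈ Finset.range k, p k m = 1)
    (hrec : ∀ k, 2 ≤ k → ∀ m,
      p k m = (if m = 0 then 0 else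
            ((((m : ℝ) - 1) + ((k : ℝ) - (m : ℝ)) * μ1) / ((k : ℝ) - 1)) * p (k - 1) (m - 1))
          + ((((k : ℝ) - 1 - (m : ℝ)) / ((k : ℝ) - 1)) * μ0) * p (k - 1) m)
    (E1 E2 : ℕ → ℝ)
    (hE1 : ∀ k, E1 k = ∑ m ∈ Finset.range k, (m : ℝ) * p k m)
    (hE2 : ∀ k, E2 k = ∑ m ∈ Finset.range k, (m : ℝ) ^ 2 * p k m) :
    E1 1 = 0 ∧ E2 1 = 0 ∧
      ∀ k, 2 ≤ k →
        E1 k = μ1 + E1 (k - 1) * (1 + μ0 / ((k : ℝ) - 1)) ∧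
        E2 k = μ1 + E1 (k - 1) * (2 - μ0 * (2 * (k : ℝ) - 3) / ((k : ℝ) - 1))
            + E2 (k - 1) * (1 + 2 * μ0 / ((k : ℝ) - 1)) :=
  luria_delbruck_moments_general μ1 μ0 hμ0 p hzero hnorm hrec E1 E2 hE1 hE2
end

section
/- Fix a natural number j ≥ 2. Let q : ℕ → ℕ → ℝ (arguments k and r) satisfy q j 1 = 1, q j r = 0 for r ≠ 1, and for all k > j and r ≥ 1: q k r = q (k−1) r · (1 − r/(k−1)) + q (k−1) (r−1) · ((r−1)/(k−1)), with q (k−1) 0 = 0. Then for all k ≥ j and r ≥ 1: q k r = (j−1) · (k−j)_{r−1} / (k−1)_{r}, where (a)_b = a·(a−1)⋯(a−b+1) denotes the falling factorial (Pochhammer symbol), with (a)_0 = 1. -/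
/-!
Clearing the denominator, `q k r * (k - 1)_r = (j - 1) * (k - j)_(r - 1)` follows by induction
on `k` from the Pascal rule `(x + 1)_(m + 1) = x_(m + 1) + (m + 1) * x_m` for falling factorials.
Where `(k - 1)_r = 0`, i.e. `r ≥ k`, both sides of the closed form vanish: a mutation carried by
one of `j` cells is carried by at most `k - j + 1` of `k` cells.
-/

open Polynomial

theorem descPochhammer_eval_succ_left {R : Type*} [CommRing R] (n : ℕ) (x : R) :
    (descPochhammer R (n + 1)).eval x = x * (descPochhammer R n).eval (x - 1) := by
  simp [descPochhammer_succ_left]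

theorem descPochhammer_eval_add_one {R : Type*} [CommRing R] (n : ℕ) (x : R) :
    (descPochhammer R (n + 1)).eval (x + 1)
      = (descPochhammer R (n + 1)).eval x + (n + 1) * (descPochhammer R n).eval x := by
  rw [descPochhammer_eval_succ_left, add_sub_cancel_right, descPochhammer_succ_eval]
  ring

namespace MutationCount

variable {j : ℕ} {q : ℕ → ℕ → ℝ}

theorem eq_zero_of_lt (hqj : ∀ r, r ≠ 1 → q j r = 0)
    (hrec : ∀ k, j < k → ∀ r, 1 ≤ r →
      q k r = q (k - 1) r * (1 - (r : ℝ) / ((k : ℝ) - 1))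
        + q (k - 1) (r - 1) * (((r : ℝ) - 1) / ((k : ℝ) - 1))) :
    ∀ k, j ≤ k → ∀ r, k + 1 < r + j → q k r = 0 := by
  intro k hk
  induction k, hk using Nat.le_induction with
  | base => exact fun r hr => hqj r (by omega)
  | succ k hk ih =>
    intro r hr
    rw [hrec (k + 1) (by omega) r (by omega), Nat.add_sub_cancel, ih r (by omega),
      ih (r - 1) (by omega)]
    ring

theorem mul_eq_of_rec
    (hrec : ∀ k, j < k → ∀ r, 1 ≤ r →
      q k r = q (k - 1) r * (1 - (r : ℝ) / ((k : ℝ) - 1))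
        + q (k - 1) (r - 1) * (((r : ℝ) - 1) / ((k : ℝ) - 1)))
    {k : ℕ} (hk : j ≤ k) (hk0 : k ≠ 0) (m : ℕ) :
    q (k + 1) (m + 1) * k = q k (m + 1) * (k - (m + 1)) + q k m * m := by
  have := hrec (k + 1) (by omega) (m + 1) (by omega)
  push_cast at this
  simp only [add_sub_cancel_right] at this
  rw [this]
  field_simp

theorem mul_descPochhammer_eq (hqj1 : q j 1 = 1) (hqj : ∀ r, r ≠ 1 → q j r = 0)
    (hstep : ∀ k, j ≤ k → ∀ m : ℕ,
      q (k + 1) (m + 1) * k = q k (m + 1) * (k - (m + 1)) + q k m * m) :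
    ∀ k, j ≤ k → ∀ m, q k (m + 1) * (descPochhammer ℝ (m + 1)).eval ((k : ℝ) - 1)
      = ((j : ℝ) - 1) * (descPochhammer ℝ m).eval ((k : ℝ) - j) := by
  intro k hk
  induction k, hk using Nat.le_induction with
  | base =>
    rintro (_ | m)
    · simp [hqj1]
    · simp [hqj (m + 2) (by omega)]
  | succ k hk ih =>
    intro m
    push_cast
    calc q (k + 1) (m + 1) * (descPochhammer ℝ (m + 1)).eval ((k : ℝ) + 1 - 1)
        = q (k + 1) (m + 1) * k * (descPochhammer ℝ m).eval ((k : ℝ) - 1) := by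
          rw [add_sub_cancel_right, descPochhammer_eval_succ_left]; ring
      _ = q k (m + 1) * (descPochhammer ℝ (m + 1)).eval ((k : ℝ) - 1)
          + m * (q k m * (descPochhammer ℝ m).eval ((k : ℝ) - 1)) := by
          rw [hstep k hk m, descPochhammer_succ_eval]; ring
      _ = ((j : ℝ) - 1) * (descPochhammer ℝ m).eval ((k : ℝ) + 1 - j) := by
          rcases m with _ | m
          · simpa using ih 0
          · rw [ih, ih, ← sub_add_eq_add_sub, descPochhammer_eval_add_one]
            push_cast
            ring

end MutationCount

open MutationCount in
theorem mutation_cell_count_general (j : ℕ) (hj : 2 ≤ j) (q : ℕ → ℕ → ℝ)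
    (hqj1 : q j 1 = 1) (hqj : ∀ r, r ≠ 1 → q j r = 0)
    (hrec : ∀ k, j < k → ∀ r, 1 ≤ r →
      q k r = q (k - 1) r * (1 - (r : ℝ) / ((k : ℝ) - 1))
        + q (k - 1) (r - 1) * (((r : ℝ) - 1) / ((k : ℝ) - 1))) :
    ∀ k, j ≤ k → ∀ r, 1 ≤ r →
      q k r = ((j : ℝ) - 1) * ((k - j).descFactorial (r - 1) : ℝ)
        / ((k - 1).descFactorial r : ℝ) := by
  intro k hk r hr
  obtain ⟨m, rfl⟩ : ∃ m, r = m + 1 := ⟨r - 1, by omega⟩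
  rw [Nat.add_sub_cancel]
  by_cases hkm : k ≤ m + 1
  · -- `(k - 1)_r = 0` makes the right side a junk `x / 0 = 0`, and `r > k - j + 1` as `j ≥ 2`
    rw [eq_zero_of_lt hqj hrec k hk (m + 1) (by omega),
      Nat.descFactorial_eq_zero_iff_lt.mpr (by omega : k - 1 < m + 1)]
    simp
  · have hstep := fun k (hk : j ≤ k) => mul_eq_of_rec hrec hk (by omega)
    rw [eq_div_iff (by exact_mod_cast (Nat.descFactorial_pos.mpr (by omega)).ne'),
      ← descPochhammer_eval_eq_descFactorial, ← descPochhammer_eval_eq_descFactorial,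
      Nat.cast_sub hk, Nat.cast_sub (by omega : 1 ≤ k), Nat.cast_one]
    exact mul_descPochhammer_eq hqj1 hqj hstep k hk m

/-- closed form for the probability `q k r` that a mutation born in a single
cell at clone size `j` is present in `r` cells at clone size `k`:
`q k r = (j-1)⬝(k-j)_{r-1}/(k-1)_r` with falling factorials. -/
theorem mutation_cell_count (j : ℕ) (hj : 2 ≤ j) (q : ℕ → ℕ → ℝ)
    (hqj1 : q j 1 = 1) (hqj : ∀ r, r ≠ 1 → q j r = 0)
    (hq0 : ∀ k, q k 0 = 0)
    (hrec : ∀ k, j < k → ∀ r, 1 ≤ r →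
      q k r = q (k - 1) r * (1 - (r : ℝ) / ((k : ℝ) - 1))
        + q (k - 1) (r - 1) * (((r : ℝ) - 1) / ((k : ℝ) - 1))) :
    ∀ k, j ≤ k → ∀ r, 1 ≤ r →
      q k r = ((j : ℝ) - 1) * ((k - j).descFactorial (r - 1) : ℝ)
        / ((k - 1).descFactorial r : ℝ) :=
  mutation_cell_count_general j hj q hqj1 hqj hrec
end

section
/- Fix natural numbers k ≥ 2 and r with 1 ≤ r ≤ k−1, and fix j ≥ 2. Let q : ℕ → ℕ → ℕ → ℝ satisfy, for each j ≥ 2: q j j 1 = 1, q j j r = 0 for r ≠ 1, and for k > j, r ≥ 1: q j k r = q j (k−1) r · (1 − r/(k−1)) + q j (k−1) (r−1) · ((r−1)/(k−1)) (with q j (k−1) 0 = 0), and set q 1 k r = 0. Then (1/(k−1)) · ∑_{j=1}^{k−r+1} q j k r = ∑_{j=1}^{k−r+1} ((j−1)/(k−1)²) · ∏_{m=1}^{r−1} (1 − (j−2)/(k−m−1)). -/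
/-!
For fixed `j ≥ 2`, induction on `k` gives the closed form
`q j k (r + 1) = (j - 1)/(k - 1) · ∏_{i < r} (1 - (j - 2)/(k - i - 2))`
for `r + 1 ≤ k - j + 1`. In the boundary case `r + 1 = k - j + 2` of the inductive step one
uses that `q j k` vanishes beyond `k - j + 1`, the largest possible number of mutant cells.
The identity then holds summand by summand, the summand `j = 1` being zero on both sides.
-/

open Finset

namespace CloneMutation

/-- The recurrence of the statement, shifted from `k` to `k + 1` and from `r` to `r + 1` so that
no truncated subtraction occurs. -/
def Recurrence (j : ℕ) (p : ℕ → ℕ → ℝ) : Prop :=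
  ∀ k, j ≤ k → ∀ r, p (k + 1) (r + 1) =
    p k (r + 1) * (1 - (r + 1 : ℝ) / k) + p k r * ((r : ℝ) / k)

variable {p : ℕ → ℕ → ℝ} {j : ℕ}

theorem eq_zero_of_sub_add_one_lt (hjj : ∀ r, r ≠ 1 → p j r = 0) (hrec : Recurrence j p)
    {k : ℕ} (hk : j ≤ k) {r : ℕ} (hr : k - j + 1 < r) : p k r = 0 := by
  induction k, hk using Nat.le_induction generalizing r with
  | base => exact hjj r (by omega)
  | succ k hk ih =>
    obtain ⟨s, rfl⟩ : ∃ s, r = s + 1 := ⟨r - 1, by omega⟩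
    rw [hrec k hk s, ih (by omega), ih (by omega)]
    ring

theorem succ_eq_mul_prod_range (hj : 2 ≤ j) (hjj1 : p j 1 = 1)
    (hjj : ∀ r, r ≠ 1 → p j r = 0) (hp0 : ∀ k, p k 0 = 0) (hrec : Recurrence j p)
    {k : ℕ} (hk : j ≤ k) {r : ℕ} (hr : r + 1 ≤ k - j + 1) :
    p k (r + 1) = ((j : ℝ) - 1) / ((k : ℝ) - 1) *
      ∏ i ∈ range r, (1 - ((j : ℝ) - 2) / ((k : ℝ) - i - 2)) := by
  have hj1 : (j : ℝ) - 1 ≠ 0 := by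
    have : (2 : ℝ) ≤ j := by exact_mod_cast hj
    linarith
  induction k, hk using Nat.le_induction generalizing r with
  | base =>
    obtain rfl : r = 0 := by omega
    simp [hjj1, hj1]
  | succ k hk ih =>
    have hk2 : (2 : ℝ) ≤ k := by exact_mod_cast hj.trans hk
    have hk0 : (k : ℝ) ≠ 0 := by positivity
    have hk1 : (k : ℝ) - 1 ≠ 0 := by linarith
    rw [hrec k hk r]
    push_cast
    rw [add_sub_cancel_right]
    rcases r with _ | s
    · rw [hp0, ih (by omega)]
      field_simp
      ring
    have hshift : ∏ i ∈ range (s + 1), (1 - ((j : ℝ) - 2) / ((k : ℝ) + 1 - i - 2)) =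
        (1 - ((j : ℝ) - 2) / ((k : ℝ) - 1)) *
          ∏ i ∈ range s, (1 - ((j : ℝ) - 2) / ((k : ℝ) - i - 2)) := by
      rw [prod_range_succ', mul_comm]
      push_cast
      ring_nf
    rw [hshift, ih (r := s) (by omega)]
    set P := ∏ i ∈ range s, (1 - ((j : ℝ) - 2) / ((k : ℝ) - i - 2))
    push_cast
    rcases (show s + 2 ≤ k - j + 1 ∨ s + 2 = k - j + 2 by omega) with hinside | hboundary
    · have hks : (k : ℝ) - s - 2 ≠ 0 := by
        have : (s : ℝ) + 2 < k := by exact_mod_cast (show s + 2 < k by omega)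
        linarith
      rw [ih hinside, prod_range_succ]
      field_simp
      ring
    · rw [eq_zero_of_sub_add_one_lt hjj hrec hk (by omega)]
      have hs : (s : ℝ) = k - j := by
        rw [show s = k - j by omega, Nat.cast_sub (by omega)]
      rw [hs]
      field_simp
      ring

end CloneMutation

theorem random_mutation_cell_count_general (k r : ℕ) (hr : 1 ≤ r) (hrk : r ≤ k - 1)
    (q : ℕ → ℕ → ℕ → ℝ)
    (hqj1 : ∀ j, 2 ≤ j → q j j 1 = 1)
    (hqj : ∀ j, 2 ≤ j → ∀ r', r' ≠ 1 → q j j r' = 0)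
    (hq0 : ∀ j, 2 ≤ j → ∀ k', q j k' 0 = 0)
    (hrec : ∀ j, 2 ≤ j → ∀ k', j < k' → ∀ r', 1 ≤ r' →
      q j k' r' = q j (k' - 1) r' * (1 - (r' : ℝ) / ((k' : ℝ) - 1))
        + q j (k' - 1) (r' - 1) * (((r' : ℝ) - 1) / ((k' : ℝ) - 1)))
    (hq1 : ∀ k' r', q 1 k' r' = 0) :
    (1 / ((k : ℝ) - 1)) * ∑ j ∈ Finset.Icc 1 (k - r + 1), q j k r
      = ∑ j ∈ Finset.Icc 1 (k - r + 1),
          (((j : ℝ) - 1) / ((k : ℝ) - 1) ^ 2) *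
            ∏ m ∈ Finset.Icc 1 (r - 1), (1 - ((j : ℝ) - 2) / ((k : ℝ) - (m : ℝ) - 1)) := by
  obtain ⟨s, rfl⟩ : ∃ s, r = s + 1 := ⟨r - 1, by omega⟩
  have hprod (j : ℕ) : ∏ m ∈ Icc 1 s, (1 - ((j : ℝ) - 2) / ((k : ℝ) - m - 1)) =
      ∏ i ∈ range s, (1 - ((j : ℝ) - 2) / ((k : ℝ) - i - 2)) := by
    rw [← Ico_add_one_right_eq_Icc, prod_Ico_eq_prod_range, Nat.add_sub_cancel]
    refine prod_congr rfl fun i _ => ?_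
    push_cast
    ring_nf
  rw [mul_sum, Nat.add_sub_cancel]
  refine sum_congr rfl fun j hj => ?_
  rw [mem_Icc] at hj
  rcases (show j = 1 ∨ 2 ≤ j by omega) with rfl | hj2
  · simp [hq1]
  have hrecj : CloneMutation.Recurrence j (q j) := fun k' hk' r' => by
    simpa using hrec j hj2 (k' + 1) (by omega) (r' + 1) (by omega)
  rw [hprod, CloneMutation.succ_eq_mul_prod_range hj2 (hqj1 j hj2) (hqj j hj2) (hq0 j hj2)
    hrecj (by omega) (by omega)]
  field_simp

/-- the probability that a randomly selected mutation is carried by exactly `r`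
of the `k` cells: `(1/(k-1)) ∑_{j=1}^{k-r+1} q j k r = ∑_{j=1}^{k-r+1} ((j-1)/(k-1)²)
∏_{m=1}^{r-1} (1 - (j-2)/(k-m-1))`. -/
theorem random_mutation_cell_count (k r : ℕ) (hk : 2 ≤ k) (hr : 1 ≤ r) (hrk : r ≤ k - 1)
    (q : ℕ → ℕ → ℕ → ℝ)
    (hqj1 : ∀ j, 2 ≤ j → q j j 1 = 1)
    (hqj : ∀ j, 2 ≤ j → ∀ r', r' ≠ 1 → q j j r' = 0)
    (hq0 : ∀ j, 2 ≤ j → ∀ k', q j k' 0 = 0)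
    (hrec : ∀ j, 2 ≤ j → ∀ k', j < k' → ∀ r', 1 ≤ r' →
      q j k' r' = q j (k' - 1) r' * (1 - (r' : ℝ) / ((k' : ℝ) - 1))
        + q j (k' - 1) (r' - 1) * (((r' : ℝ) - 1) / ((k' : ℝ) - 1)))
    (hq1 : ∀ k' r', q 1 k' r' = 0) :
    (1 / ((k : ℝ) - 1)) * ∑ j ∈ Finset.Icc 1 (k - r + 1), q j k r
      = ∑ j ∈ Finset.Icc 1 (k - r + 1),
          (((j : ℝ) - 1) / ((k : ℝ) - 1) ^ 2) *
            ∏ m ∈ Finset.Icc 1 (r - 1), (1 - ((j : ℝ) - 2) / ((k : ℝ) - (m : ℝ) - 1)) :=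
  random_mutation_cell_count_general k r hr hrk q hqj1 hqj hq0 hrec hq1
end

section
/- Let a, b, c be nonnegative reals with a + b + c = 1 and a > 0. For n ≥ 1 define u_n = ∑_{x=0}^{⌊(n−1)/2⌋} n!/(x!·(x+1)!·(n−2x−1)!) · a^x · b^{n−2x−1} · c^{x+1}, and u_0 = 0. Then for every real t with 0 < t and t·(b + 2·√(a·c)) < 1, the series ∑_{n=0}^∞ u_n·t^n converges (HasSum) to (1/(2·a·t)) · ((1 − 4·a·c·t²/(1 − b·t)²)^{−1/2} − 1). -/
/-!
Sort the walks by their number `x` of up steps and `m` of flat steps; such a walk has `x + 1`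
down steps and length `2x + 1 + m`. This turns the series into a double series of nonnegative
terms. Summing over `m` first is a negative binomial series in `bt`, which leaves
`(1/(at)) ∑ₓ C(2x+1, x) yˣ⁺¹` with `y = act²/(1 - bt)²`. As `C(2x+1, x)` is half the central
binomial coefficient `C(2x+2, x+1)`, what remains is the binomial series
`(1 - 4y)^(-1/2) = ∑ₖ C(2k, k) yᵏ` without its constant term.
-/

open Finset Nat

theorem ascPochhammer_eval_half_mul_four_pow (n : ℕ) :
    (ascPochhammer ℝ n).eval (1 / 2) * 4 ^ n = n.centralBinom * n ! := by
  induction n with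
  | zero => simp
  | succ n ih =>
    have h : ((n + 1 : ℕ) : ℝ) * (n + 1).centralBinom = 2 * (2 * n + 1) * n.centralBinom := by
      exact_mod_cast succ_mul_centralBinom_succ n
    rw [ascPochhammer_succ_eval, pow_succ, factorial_succ]
    push_cast at h ⊢
    linear_combination (2 + 4 * (n : ℝ)) * ih - (n ! : ℝ) * h

theorem multichoose_one_half (n : ℕ) :
    Ring.multichoose (1 / 2 : ℝ) n = n.centralBinom / 4 ^ n := by
  have h := Ring.factorial_nsmul_multichoose_eq_ascPochhammer (1 / 2 : ℝ) n
  rw [Polynomial.ascPochhammer_smeval_eq_eval, nsmul_eq_mul] at h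
  rw [eq_div_iff (by positivity)]
  apply mul_left_cancel₀ (show (n ! : ℝ) ≠ 0 by positivity)
  rw [← mul_assoc, h, ascPochhammer_eval_half_mul_four_pow, mul_comm]

theorem hasSum_centralBinom_mul_pow {y : ℝ} (hy : |4 * y| < 1) :
    HasSum (fun n ↦ n.centralBinom * y ^ n) ((1 - 4 * y) ^ (-(1 : ℝ) / 2)) := by
  have hmem : 4 * y ∈ Metric.eball (0 : ℝ) 1 := by
    rwa [mem_eball_zero_iff, ← ofReal_norm, ENNReal.ofReal_lt_one]
  have h := (Real.one_div_one_sub_rpow_hasFPowerSeriesOnBall_zero (1 / 2)).hasSum hmem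
  have hterm (n : ℕ) :
      Ring.choose ((1 / 2 : ℝ) + n - 1) n • (4 * y) ^ n = n.centralBinom * y ^ n := by
    rw [← Ring.multichoose_eq, multichoose_one_half, smul_eq_mul, mul_pow]
    field_simp
  simp only [FormalMultilinearSeries.ofScalars_apply_eq, zero_add, hterm] at h
  rwa [neg_div, Real.rpow_neg (by linarith [le_abs_self (4 * y)]), ← one_div]

theorem centralBinom_succ_eq_two_mul_choose (n : ℕ) :
    (n + 1).centralBinom = 2 * (2 * n + 1).choose n := by
  rw [centralBinom_eq_two_mul_choose, show 2 * (n + 1) = 2 * n + 1 + 1 by ring, choose_succ_succ',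
    choose_symm_half]
  ring

theorem factorial_add_add_div_eq_choose_mul_choose (i j m : ℕ) :
    ((i + j + m)! : ℝ) / (i ! * j ! * m !) = (m + (i + j)).choose (i + j) * (i + j).choose i := by
  have h₁ := add_choose_mul_factorial_mul_factorial m (i + j)
  have h₂ := add_choose_mul_factorial_mul_factorial i j
  rw [← choose_symm_add] at h₂
  rw [div_eq_iff (by positivity), add_comm _ m, ← h₁, ← h₂]
  push_cast
  ring

theorem hasSum_of_prod_fiberwise_of_nonneg {α β : Type*} {f : α × β → ℝ} (hf : 0 ≤ f) {g : α → ℝ}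
    {s : ℝ} (hfib : ∀ x, HasSum (fun y ↦ f (x, y)) (g x)) (hg : HasSum g s) : HasSum f s := by
  have hsum : Summable f := (summable_prod_of_nonneg hf).2
    ⟨fun x ↦ (hfib x).summable, by simpa only [fun x ↦ (hfib x).tsum_eq] using hg.summable⟩
  exact hg.unique (hsum.hasSum.prod_fiberwise hfib) ▸ hsum.hasSum

theorem HasSum.regroup_two_mul_add_one_add {α : Type*} [AddCommMonoid α] [TopologicalSpace α]
    [ContinuousAdd α] [RegularSpace α] {f : ℕ × ℕ → α} {s : α} (hf : HasSum f s) :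
    HasSum (fun n ↦ ∑ x ∈ range ((n + 1) / 2), f (x, n - 2 * x - 1)) s := by
  let e : ℕ × ℕ → ℕ × ℕ := fun p ↦ (2 * p.1 + 1 + p.2, p.1)
  let g : ℕ × ℕ → α := fun q ↦ if 2 * q.2 + 1 ≤ q.1 then f (q.2, q.1 - 2 * q.2 - 1) else 0
  have he : e.Injective := fun p q h ↦ by
    simp only [e, Prod.ext_iff] at h ⊢
    omega
  have hge : g ∘ e = f := funext fun p ↦ by
    simp only [g, e, Function.comp_apply, if_pos (show 2 * p.1 + 1 ≤ 2 * p.1 + 1 + p.2 by omega)]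
    congr
    omega
  have hg : HasSum g s := by
    rw [← hge] at hf
    refine (he.hasSum_iff fun q hq ↦ if_neg fun hle ↦ hq ⟨(q.2, q.1 - 2 * q.2 - 1), ?_⟩).1 hf
    simp only [e, Prod.ext_iff, and_true]
    omega
  refine hg.prod_fiberwise fun n ↦ ?_
  have hfin : ∀ x ∉ range ((n + 1) / 2), g (n, x) = 0 := fun x hx ↦
    if_neg (by simp only [mem_range] at hx; omega)
  have hrange : ∑ x ∈ range ((n + 1) / 2), g (n, x) =
      ∑ x ∈ range ((n + 1) / 2), f (x, n - 2 * x - 1) :=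
    sum_congr rfl fun x hx ↦ if_pos (by simp only [mem_range] at hx; omega)
  exact hrange ▸ hasSum_sum_of_ne_finset_zero hfin

theorem hasSum_choose_two_mul_add_one_mul_pow {y : ℝ} (hy : |4 * y| < 1) :
    HasSum (fun n : ℕ ↦ ((2 * n + 1).choose n : ℝ) * y ^ (n + 1))
      (((1 - 4 * y) ^ (-(1 : ℝ) / 2) - 1) / 2) := by
  have h := ((hasSum_nat_add_iff' 1).mpr (hasSum_centralBinom_mul_pow hy)).div_const 2
  simp only [sum_range_one, centralBinom_zero, pow_zero, cast_one, mul_one] at h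
  refine h.congr_fun fun n ↦ ?_
  rw [centralBinom_succ_eq_two_mul_choose]
  push_cast
  ring

noncomputable def walkWeight (p q r : ℝ) (xm : ℕ × ℕ) : ℝ :=
  ((2 * xm.1 + 1 + xm.2)! : ℝ) / (xm.1 ! * (xm.1 + 1)! * xm.2 !) * p ^ xm.1 * q ^ xm.2 *
    r ^ (xm.1 + 1)

theorem hasSum_walkWeight_fiber (p : ℝ) {q : ℝ} (r : ℝ) (hq : |q| < 1) (x : ℕ) :
    HasSum (fun m ↦ walkWeight p q r (x, m))
      ((2 * x + 1).choose x * p ^ x * r ^ (x + 1) / (1 - q) ^ (2 * x + 2)) := by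
  have h := (hasSum_choose_mul_geometric_of_norm_lt_one (2 * x + 1) hq).mul_left
    ((2 * x + 1).choose x * p ^ x * r ^ (x + 1))
  rw [mul_one_div] at h
  refine h.congr_fun fun m ↦ ?_
  rw [walkWeight, show 2 * x + 1 + m = x + (x + 1) + m by ring,
    factorial_add_add_div_eq_choose_mul_choose, show x + (x + 1) = 2 * x + 1 by ring]
  ring

theorem hasSum_walkWeight {p q r : ℝ} (hp : 0 < p) (hq₀ : 0 ≤ q) (hq₁ : q < 1) (hr : 0 ≤ r)
    (hpqr : 4 * p * r < (1 - q) ^ 2) :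
    HasSum (walkWeight p q r)
      (1 / (2 * p) * ((1 - 4 * p * r / (1 - q) ^ 2) ^ (-(1 : ℝ) / 2) - 1)) := by
  have hq : |q| < 1 := by rwa [abs_of_nonneg hq₀]
  have hq' : 1 - q ≠ 0 := by linarith
  have hy : |4 * (p * r / (1 - q) ^ 2)| < 1 := by
    rw [abs_of_nonneg (by positivity), ← mul_div_assoc, ← mul_assoc, div_lt_one (by positivity)]
    exact hpqr
  refine hasSum_of_prod_fiberwise_of_nonneg (fun _ ↦ by unfold walkWeight; positivity)
    (hasSum_walkWeight_fiber p r hq) ?_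
  have h := (hasSum_choose_two_mul_add_one_mul_pow hy).mul_left (1 / p)
  rw [show 4 * p * r / (1 - q) ^ 2 = 4 * (p * r / (1 - q) ^ 2) by ring,
    show ∀ v : ℝ, 1 / (2 * p) * v = 1 / p * (v / 2) by intro v; ring]
  refine h.congr_fun fun x ↦ ?_
  rw [div_pow, mul_pow, ← pow_mul]
  field_simp
  ring

theorem unrestricted_walk_from_one_gf_general (a b c : ℝ)
    (hb : 0 ≤ b) (hc : 0 ≤ c) (ha' : 0 < a)
    (u : ℕ → ℝ) (hu0 : u 0 = 0)
    (hu : ∀ n, 1 ≤ n → u n = ∑ x ∈ Finset.range ((n - 1) / 2 + 1),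
      (n.factorial : ℝ) / ((x.factorial : ℝ) * ((x + 1).factorial : ℝ) *
          ((n - 2 * x - 1).factorial : ℝ)) *
        a ^ x * b ^ (n - 2 * x - 1) * c ^ (x + 1))
    (t : ℝ) (ht : 0 < t) (ht1 : t * (b + 2 * Real.sqrt (a * c)) < 1) :
    HasSum (fun n : ℕ => u n * t ^ n)
      ((1 / (2 * a * t)) *
        ((1 - 4 * a * c * t ^ 2 / (1 - b * t) ^ 2) ^ (-(1 : ℝ) / 2) - 1)) := by
  have hsqrt : 2 * Real.sqrt (a * c) * t < 1 - b * t := by linarith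
  have hbt : b * t < 1 := by nlinarith [Real.sqrt_nonneg (a * c)]
  have hact : 4 * (a * t) * (c * t) < (1 - b * t) ^ 2 :=
    calc 4 * (a * t) * (c * t) = (2 * Real.sqrt (a * c) * t) ^ 2 := by
          rw [mul_pow, mul_pow, Real.sq_sqrt (by positivity)]; ring
      _ < (1 - b * t) ^ 2 := pow_lt_pow_left₀ hsqrt (by positivity) two_ne_zero
  have h := (hasSum_walkWeight (mul_pos ha' ht) (mul_nonneg hb ht.le) hbt (mul_nonneg hc ht.le)
    hact).regroup_two_mul_add_one_add
  rw [show 2 * (a * t) = 2 * a * t by ring, show 4 * (a * t) * (c * t) = 4 * a * c * t ^ 2 by ring]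
    at h
  refine h.congr_fun fun n ↦ ?_
  rcases n.eq_zero_or_pos with rfl | hn
  · simp [hu0]
  rw [hu n hn, sum_mul, show (n - 1) / 2 + 1 = (n + 1) / 2 by omega]
  refine sum_congr rfl fun x hx ↦ ?_
  obtain ⟨m, rfl⟩ : ∃ m, n = 2 * x + 1 + m := ⟨n - 2 * x - 1, by rw [mem_range] at hx; omega⟩
  rw [walkWeight, show 2 * x + 1 + m - 2 * x - 1 = m by omega]
  ring

/-- the generating function of `u_n`, the probability that an unrestricted
`(a,b,c)`-random walk started at height `1` is at height `0` after `n` steps. -/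
theorem unrestricted_walk_from_one_gf (a b c : ℝ)
    (ha : 0 ≤ a) (hb : 0 ≤ b) (hc : 0 ≤ c) (habc : a + b + c = 1) (ha' : 0 < a)
    (u : ℕ → ℝ) (hu0 : u 0 = 0)
    (hu : ∀ n, 1 ≤ n → u n = ∑ x ∈ Finset.range ((n - 1) / 2 + 1),
      (n.factorial : ℝ) / ((x.factorial : ℝ) * ((x + 1).factorial : ℝ) *
          ((n - 2 * x - 1).factorial : ℝ)) *
        a ^ x * b ^ (n - 2 * x - 1) * c ^ (x + 1))
    (t : ℝ) (ht : 0 < t) (ht1 : t * (b + 2 * Real.sqrt (a * c)) < 1) :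
    HasSum (fun n : ℕ => u n * t ^ n)
      ((1 / (2 * a * t)) *
        ((1 - 4 * a * c * t ^ 2 / (1 - b * t) ^ 2) ^ (-(1 : ℝ) / 2) - 1)) :=
  unrestricted_walk_from_one_gf_general a b c hb hc ha' u hu0 hu t ht ht1
end
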